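/- Suppose Δ is (a+1)-CLeray with frame dimension c-1 ≥ a-1, characterized by: H̃_p(Δ_R^{S,T}) = 0 whenever p + |S| ≥ c and p ≥ c - a, for every partition [n] = R ∪ S ∪ T. Then H̃_{c-a}(lk_Δ S) ≠ 0 for every face S of Δ with |S| = a - 1. -/

import Mathlib

/-!
Chains are modelled as functions `Finset (Fin n) → k` supported on faces, with the boundary
operator of the full simplex. The key step: if `H̃_q(Δ_R^{u ∪ V}) = 0`, then a `q`-cycle of
`Δ_R^V` that bounds in `Δ_{R ∪ u}^V` already bounds in `Δ_R^V`, because the part of the filling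
through `u` is, after contraction at `u`, a cycle of `Δ_R^{u ∪ V}`.

For `a = 1`, let `N` be a minimal nonface of `lk V`. The boundary of the simplex `N` is a cycle
of `Δ_N^V` with no filling there, and removing the vertices outside `N ∪ V` one at a time shows
that it has no filling in `Δ_{Vᶜ}^V = lk V` either. For `a > 1`, move a vertex `v ∈ S` into `V`:
`lk (V ∪ v)` has frame dimension `c' - 1` with `c' ≥ c - 1` and inherits the vanishing condition
with `a - 1`, so by induction `H̃_{c' - a + 1}(lk (S ∪ V)) ≠ 0`; the vanishing condition for
`lk V` rules this out unless `c' = c - 1`.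
-/

open Finset

namespace SCx

variable (k : Type) [Field k] {n : ℕ}

/-- An (abstract) simplicial complex on the vertex set `Fin n`:
a set of finsets closed under taking subsets. -/
def IsComplex (Δ : Set (Finset (Fin n))) : Prop :=
  ∀ F ∈ Δ, ∀ G ⊆ F, G ∈ Δ

/-- Simplicial `p`-chains with coefficients in `k`: functions on the faces of
cardinality `p+1`. -/
abbrev Chains (Δ : Set (Finset (Fin n))) (p : ℤ) : Type :=
  {F : Finset (Fin n) // F ∈ Δ ∧ (F.card : ℤ) = p + 1} → k

open Classical in
/-- The underlying function of the simplicial boundary map, written via its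
transpose formula:
`(∂ f) G = ∑_{x : insert x G ∈ Δ} (-1)^{pos of x in insert x G} f (insert x G)`. -/
noncomputable def boundaryFun (Δ : Set (Finset (Fin n))) (p : ℤ)
    (f : Chains k Δ p) : Chains k Δ (p - 1) := fun G => ∑ x : Fin n,
  if h : x ∉ G.1 ∧ insert x G.1 ∈ Δ then
    (-1 : k) ^ (G.1.filter (fun y => y < x)).card *
      f ⟨insert x G.1, h.2, by
        have hc := G.2.2
        rw [Finset.card_insert_of_notMem h.1]
        push_cast at hc ⊢
        omega⟩
  else 0

/-- The simplicial boundary map. -/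
noncomputable def boundary (Δ : Set (Finset (Fin n))) (p : ℤ) :
    Chains k Δ p →ₗ[k] Chains k Δ (p - 1) where
  toFun := boundaryFun k Δ p
  map_add' f g := by
    funext G
    unfold boundaryFun
    rw [Pi.add_apply]
    rw [← Finset.sum_add_distrib]
    refine Finset.sum_congr rfl fun x _ => ?_
    split_ifs with h
    · rw [Pi.add_apply]; ring
    · rw [add_zero]
  map_smul' c f := by
    funext G
    unfold boundaryFun
    simp only [RingHom.id_apply, Pi.smul_apply, smul_eq_mul, Finset.mul_sum]
    refine Finset.sum_congr rfl fun x _ => ?_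
    split_ifs with h
    · ring
    · rw [mul_zero]

/-- Transport of chains along an equality of degrees. -/
noncomputable def chainsCongr (Δ : Set (Finset (Fin n))) {p q : ℤ} (h : p = q) :
    Chains k Δ p ≃ₗ[k] Chains k Δ q := by
  subst h; exact LinearEquiv.refl k _

noncomputable def cycles (Δ : Set (Finset (Fin n))) (p : ℤ) : Submodule k (Chains k Δ p) :=
  LinearMap.ker (boundary k Δ p)

noncomputable def boundaries (Δ : Set (Finset (Fin n))) (p : ℤ) : Submodule k (Chains k Δ p) :=
  LinearMap.range ((chainsCongr k Δ (show p + 1 - 1 = p by ring)).toLinearMap ∘ₗ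
    boundary k Δ (p + 1))

/-- Reduced simplicial homology of `Δ` in degree `p`, with coefficients in the field `k`,
defined as cycles modulo (boundaries intersected with cycles).  With this convention
`H̃_{-1}({∅}) = k`. -/
abbrev ReducedHomology (Δ : Set (Finset (Fin n))) (p : ℤ) :=
  ↥(cycles k Δ p) ⧸ (Submodule.comap (cycles k Δ p).subtype (boundaries k Δ p))

/-- The Alexander dual of `Δ`. -/
def dual (Δ : Set (Finset (Fin n))) : Set (Finset (Fin n)) := {F | Fᶜ ∉ Δ}

/-- The restriction `Δ_R` of `Δ` to a vertex subset `R`. -/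
def restrict (Δ : Set (Finset (Fin n))) (R : Finset (Fin n)) : Set (Finset (Fin n)) :=
  {F | F ∈ Δ ∧ F ⊆ R}

/-- The link `lk_Δ S`. -/
def link (Δ : Set (Finset (Fin n))) (S : Finset (Fin n)) : Set (Finset (Fin n)) :=
  {F | Disjoint F S ∧ F ∪ S ∈ Δ}

/-- `Δ_R^{S,T} = {F ⊆ R : F ∪ S ∈ Δ}` (for `T` the complement of `R ∪ S`). -/
def sub (Δ : Set (Finset (Fin n))) (R S : Finset (Fin n)) : Set (Finset (Fin n)) :=
  {F | F ⊆ R ∧ F ∪ S ∈ Δ}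

/-- `Δ` has dimension `d - 1`, i.e. `d` is the maximal cardinality of a face. -/
def IsDim (Δ : Set (Finset (Fin n))) (d : ℕ) : Prop :=
  (∀ F ∈ Δ, F.card ≤ d) ∧ ∃ F ∈ Δ, F.card = d

/-- `Δ` has frame dimension `c - 1`, i.e. `c` is the largest integer such that
every `c`-subset of `[n]` is a face of `Δ`. -/
def IsFrame (Δ : Set (Finset (Fin n))) (c : ℕ) : Prop :=
  (∀ F : Finset (Fin n), F.card ≤ c → F ∈ Δ) ∧
    ∃ F : Finset (Fin n), F.card = c + 1 ∧ F ∉ Δ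

/-- A facet: a maximal face. -/
def IsFacet (Δ : Set (Finset (Fin n))) (F : Finset (Fin n)) : Prop :=
  F ∈ Δ ∧ ∀ G ∈ Δ, F ⊆ G → F = G

section SimplexChains

variable {k}

def insertSign (G : Finset (Fin n)) (x : Fin n) : k := (-1) ^ #{y ∈ G | y < x}

lemma insertSign_insert {G : Finset (Fin n)} {x : Fin n} (hx : x ∉ G) (y : Fin n) :
    (insertSign (insert x G) y : k) = insertSign G y * if x < y then -1 else 1 := by
  unfold insertSign
  rw [filter_insert]
  split_ifs with h
  · rw [card_insert_of_notMem (fun hm => hx (mem_of_mem_filter x hm)), pow_succ]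
  · rw [mul_one]

lemma insertSign_insert_mul_comm {G : Finset (Fin n)} {x y : Fin n} (hx : x ∉ G) (hy : y ∉ G)
    (hxy : x ≠ y) :
    (insertSign G x * insertSign (insert x G) y : k) =
      -(insertSign G y * insertSign (insert y G) x) := by
  rw [insertSign_insert hx, insertSign_insert hy]
  rcases hxy.lt_or_gt with h | h
  · rw [if_pos h, if_neg h.asymm]; ring
  · rw [if_neg h.asymm, if_pos h]; ring

lemma insertSign_ne_zero (G : Finset (Fin n)) (x : Fin n) : (insertSign G x : k) ≠ 0 :=
  pow_ne_zero _ (neg_ne_zero.mpr one_ne_zero)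

/-- The boundary operator of the full simplex on `Fin n`; a `p`-chain is a function supported
on sets of cardinality `p + 1`. -/
noncomputable def simplexBoundary : (Finset (Fin n) → k) →ₗ[k] (Finset (Fin n) → k) where
  toFun f G := ∑ x ∈ Gᶜ, insertSign G x * f (insert x G)
  map_add' f g := by ext G; simp [mul_add, sum_add_distrib]
  map_smul' c f := by ext G; simp [mul_left_comm, mul_sum]

lemma simplexBoundary_apply (f : Finset (Fin n) → k) (G : Finset (Fin n)) :
    simplexBoundary f G = ∑ x ∈ Gᶜ, insertSign G x * f (insert x G) := rfl

theorem simplexBoundary_simplexBoundary (f : Finset (Fin n) → k) :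
    simplexBoundary (simplexBoundary f) = 0 := by
  ext G
  simp only [simplexBoundary_apply, mul_sum, Pi.zero_apply]
  rw [← sum_finset_product' Gᶜ.offDiag Gᶜ (fun x => (insert x G)ᶜ) (by
    rintro ⟨x, y⟩
    simp only [mem_offDiag, mem_compl, mem_insert, not_or]
    tauto)]
  refine sum_involution (fun p _ => p.swap) (fun ⟨x, y⟩ hp => ?_) (fun ⟨x, y⟩ hp _ => ?_)
    (fun p hp => mem_offDiag.mpr ?_) (fun p _ => p.swap_swap)
  · obtain ⟨hx, hy, hxy⟩ := mem_offDiag.mp hp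
    rw [mem_compl] at hx hy
    simp only [Prod.swap]
    rw [insert_comm y x, ← mul_assoc, ← mul_assoc, insertSign_insert_mul_comm hx hy hxy]
    ring
  · exact fun h => (mem_offDiag.mp hp).2.2 (Prod.ext_iff.mp h).2
  · obtain ⟨hx, hy, hxy⟩ := mem_offDiag.mp hp
    exact ⟨hy, hx, hxy.symm⟩

end SimplexChains

section Cycles

variable {k}

def IsChain (Δ : Set (Finset (Fin n))) (p : ℤ) (f : Finset (Fin n) → k) : Prop :=
  ∀ F, f F ≠ 0 → F ∈ Δ ∧ (F.card : ℤ) = p + 1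

lemma IsChain.mono {Δ Δ' : Set (Finset (Fin n))} {p : ℤ} {f : Finset (Fin n) → k}
    (hf : IsChain Δ p f) (h : Δ ⊆ Δ') : IsChain Δ' p f :=
  fun F hF => ⟨h (hf F hF).1, (hf F hF).2⟩

lemma IsChain.add {Δ : Set (Finset (Fin n))} {p : ℤ} {f g : Finset (Fin n) → k}
    (hf : IsChain Δ p f) (hg : IsChain Δ p g) : IsChain Δ p (f + g) := by
  intro F hF
  by_cases hfF : f F = 0
  · exact hg F (by simpa [hfF] using hF)
  · exact hf F hfF

variable (k) in
def CyclesBound (Δ : Set (Finset (Fin n))) (p : ℤ) : Prop :=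
  ∀ f : Finset (Fin n) → k, IsChain Δ p f → simplexBoundary f = 0 →
    ∃ w, IsChain Δ (p + 1) w ∧ simplexBoundary w = f

open Classical in
noncomputable def extendChain {Δ : Set (Finset (Fin n))} {p : ℤ} (f : Chains k Δ p) :
    Finset (Fin n) → k :=
  fun F => if h : F ∈ Δ ∧ (F.card : ℤ) = p + 1 then f ⟨F, h⟩ else 0

variable {Δ : Set (Finset (Fin n))} {p : ℤ}

lemma extendChain_restrict {f : Finset (Fin n) → k} (hf : IsChain Δ p f) :
    extendChain (fun F : {F // F ∈ Δ ∧ (F.card : ℤ) = p + 1} => f F.1) = f := by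
  ext F
  unfold extendChain
  split_ifs with h
  · rfl
  · by_contra hne
    exact h (hf F (Ne.symm hne))

lemma isChain_extendChain (f : Chains k Δ p) : IsChain Δ p (extendChain f) := by
  intro F hF
  by_contra h
  exact hF (dif_neg h)

lemma extendChain_injective : Function.Injective (extendChain : Chains k Δ p → _) := by
  intro f g h
  funext F
  simpa [extendChain, dif_pos F.2] using congrFun h F.1

lemma extendChain_chainsCongr {q : ℤ} (h : p = q) (f : Chains k Δ p) :
    extendChain (chainsCongr k Δ h f) = extendChain f := by
  subst h; rfl

lemma simplexBoundary_extendChain (hΔ : IsComplex Δ) (f : Chains k Δ p) :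
    simplexBoundary (extendChain f) = extendChain (boundaryFun k Δ p f) := by
  ext G
  rw [simplexBoundary_apply, show Gᶜ = ({x | x ∉ G} : Finset _) by ext; simp, sum_filter]
  unfold extendChain boundaryFun
  by_cases hG : G ∈ Δ ∧ (G.card : ℤ) = p - 1 + 1
  · rw [dif_pos hG]
    refine sum_congr rfl fun x _ => ?_
    by_cases hx : x ∉ G ∧ insert x G ∈ Δ
    · rw [if_pos hx.1, dif_pos hx,
        dif_pos ⟨hx.2, by rw [card_insert_of_notMem hx.1]; push_cast; omega⟩]
      rfl
    · rw [dif_neg hx]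
      by_cases hxG : x ∉ G
      · rw [if_pos hxG, dif_neg fun hins => hx ⟨hxG, hins.1⟩, mul_zero]
      · rw [if_neg hxG]
  · rw [dif_neg hG]
    refine sum_eq_zero fun x _ => ?_
    by_cases hx : x ∉ G
    · rw [if_pos hx, dif_neg, mul_zero]
      rintro ⟨hins, hcard⟩
      refine hG ⟨hΔ _ hins _ (subset_insert x G), ?_⟩
      rw [card_insert_of_notMem hx] at hcard
      push_cast at hcard
      omega
    · rw [if_neg hx]

theorem cyclesBound_of_subsingleton (hΔ : IsComplex Δ)
    (h : Subsingleton (ReducedHomology k Δ p)) : CyclesBound k Δ p := by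
  intro f hf hcyc
  set f' : Chains k Δ p := fun F => f F.1
  have hf' : f' ∈ cycles k Δ p := by
    show boundaryFun k Δ p f' = 0
    refine extendChain_injective (p := p - 1) ?_
    rw [← simplexBoundary_extendChain hΔ, extendChain_restrict hf, hcyc]
    ext F
    simp [extendChain]
  obtain ⟨w, hw⟩ : f' ∈ boundaries k Δ p :=
    Submodule.eq_top_iff'.mp (Submodule.Quotient.subsingleton_iff.mp h) ⟨f', hf'⟩
  refine ⟨extendChain w, isChain_extendChain w, ?_⟩
  rw [simplexBoundary_extendChain hΔ, ← extendChain_chainsCongr (show p + 1 - 1 = p by ring)]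
  exact (congrArg extendChain hw).trans (extendChain_restrict hf)

end Cycles

section Descent

variable {k} {Δ : Set (Finset (Fin n))}

lemma sub_mono {R R' : Finset (Fin n)} (h : R ⊆ R') (S : Finset (Fin n)) :
    sub Δ R S ⊆ sub Δ R' S :=
  fun _ hF => ⟨hF.1.trans h, hF.2⟩

lemma isComplex_sub (hΔ : IsComplex Δ) (R S : Finset (Fin n)) : IsComplex (sub Δ R S) := by
  rintro F ⟨hFR, hFS⟩ G hGF
  exact ⟨hGF.trans hFR, hΔ _ hFS _ (union_subset_union hGF subset_rfl)⟩

lemma link_eq_sub_compl (S : Finset (Fin n)) :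
    link Δ S = sub Δ Sᶜ S := by
  ext F
  exact and_congr subset_compl_iff_disjoint_right.symm Iff.rfl

lemma simplexBoundary_apply_of_notMem (w : Finset (Fin n) → k) {u : Fin n}
    {G : Finset (Fin n)} (hu : u ∉ G) :
    simplexBoundary w G = simplexBoundary (fun F => if u ∈ F then 0 else w F) G +
      insertSign G u * w (insert u G) := by
  have hu' : u ∈ Gᶜ := mem_compl.mpr hu
  rw [simplexBoundary_apply, simplexBoundary_apply, ← add_sum_erase _ _ hu',
    ← add_sum_erase _ _ hu', if_pos (mem_insert_self u G), mul_zero, zero_add, add_comm]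
  congr 1
  refine sum_congr rfl fun x hx => ?_
  rw [if_neg (by rw [mem_insert, not_or]; exact ⟨fun h => ne_of_mem_erase hx h.symm, hu⟩)]

lemma simplexBoundary_apply_of_mem (w : Finset (Fin n) → k) {u : Fin n}
    {G : Finset (Fin n)} (hu : u ∈ G) :
    simplexBoundary (fun F => if u ∈ F then 0 else w F) G = 0 :=
  sum_eq_zero fun x _ => by simp only [if_pos (mem_insert_of_mem hu), mul_zero]

theorem exists_isChain_sub_of_insert (hΔ : IsComplex Δ) {R V : Finset (Fin n)} {u : Fin n}
    (hu : u ∉ R) {q : ℤ} (hlink : CyclesBound k (sub Δ R (insert u V)) q)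
    {f w : Finset (Fin n) → k} (hf : IsChain (sub Δ R V) q f)
    (hw : IsChain (sub Δ (insert u R) V) (q + 1) w) (hwf : simplexBoundary w = f) :
    ∃ w', IsChain (sub Δ R V) (q + 1) w' ∧ simplexBoundary w' = f := by
  set w₀ : Finset (Fin n) → k := fun F => if u ∈ F then 0 else w F
  have hw₀ : IsChain (sub Δ R V) (q + 1) w₀ := by
    intro F hF
    have huF : u ∉ F := fun h => hF (if_pos h)
    obtain ⟨⟨hFR, hFV⟩, hcard⟩ := hw F (by simpa [w₀, huF] using hF)
    refine ⟨⟨fun x hx => (mem_insert.mp (hFR hx)).resolve_left ?_, hFV⟩, hcard⟩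
    rintro rfl
    exact huF hx
  -- `f - ∂w₀` is `w` contracted at `u`, a chain of the link of `u`.
  have hcontr : IsChain (sub Δ R (insert u V)) q (f - simplexBoundary w₀) := by
    intro G hG
    by_cases huG : u ∈ G
    · refine absurd ?_ hG
      rw [Pi.sub_apply, simplexBoundary_apply_of_mem w huG, sub_zero]
      by_contra hfG
      exact hu ((hf G hfG).1.1 huG)
    · rw [Pi.sub_apply, ← hwf, simplexBoundary_apply_of_notMem w huG, add_sub_cancel_left] at hG
      obtain ⟨⟨hGR, hGV⟩, hcard⟩ := hw _ (right_ne_zero_of_mul hG)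
      refine ⟨⟨fun x hx => (mem_insert.mp (hGR (mem_insert_of_mem hx))).resolve_left ?_, ?_⟩, ?_⟩
      · rintro rfl
        exact huG hx
      · rwa [union_insert, ← insert_union]
      · rw [card_insert_of_notMem huG] at hcard
        push_cast at hcard
        omega
  obtain ⟨w₁, hw₁, hw₁f⟩ := hlink _ hcontr (by
    rw [map_sub, ← hwf, simplexBoundary_simplexBoundary, simplexBoundary_simplexBoundary,
      sub_zero])
  refine ⟨w₀ + w₁, hw₀.add (hw₁.mono ?_), by rw [map_add, hw₁f, add_sub_cancel]⟩
  rintro F ⟨hFR, hFV⟩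
  exact ⟨hFR, hΔ _ hFV _ (union_subset_union subset_rfl (subset_insert u V))⟩

theorem exists_isChain_sub_of_union (hΔ : IsComplex Δ) {T V : Finset (Fin n)} {q : ℤ}
    (hvan : ∀ R u, Disjoint R V → u ∉ R → u ∉ V → CyclesBound k (sub Δ R (insert u V)) q)
    {f : Finset (Fin n) → k} (hf : IsChain (sub Δ T V) q f) (D : Finset (Fin n)) :
    Disjoint D T → Disjoint (D ∪ T) V → ∀ w, IsChain (sub Δ (D ∪ T) V) (q + 1) w →
      simplexBoundary w = f → ∃ w', IsChain (sub Δ T V) (q + 1) w' ∧ simplexBoundary w' = f := by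
  induction D using Finset.induction_on with
  | empty => exact fun _ _ w hw hwf => ⟨w, by simpa using hw, hwf⟩
  | insert u D huD ih =>
    intro hDT hDV w hw hwf
    rw [insert_union] at hDV hw
    rw [disjoint_insert_left] at hDT hDV
    have huDT : u ∉ D ∪ T := by simp [huD, hDT.1]
    obtain ⟨w', hw', hw'f⟩ := exists_isChain_sub_of_insert hΔ huDT
      (hvan _ u hDV.2 huDT hDV.1) (hf.mono (sub_mono subset_union_right V)) hw hwf
    exact ih hDT.2 hDV.2 w' hw' hw'f

end Descent

section Nonvanishing

variable {k} {Δ : Set (Finset (Fin n))}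

/-- `lk_Δ V` has frame dimension `c - 1` as a complex on the vertex set `Vᶜ`. -/
def IsLinkFrame (Δ : Set (Finset (Fin n))) (V : Finset (Fin n)) (c : ℕ) : Prop :=
  (∀ F, Disjoint F V → F.card ≤ c → F ∪ V ∈ Δ) ∧
    ∃ N, Disjoint N V ∧ N.card = c + 1 ∧ N ∪ V ∉ Δ

variable (k) in
/-- The vanishing condition characterizing `(a+1)`-CLeray complexes, for `lk_Δ V`. -/
def IsLinkCLeray (Δ : Set (Finset (Fin n))) (V : Finset (Fin n)) (a c : ℕ) : Prop :=
  ∀ R S : Finset (Fin n), Disjoint R S → Disjoint R V → Disjoint S V →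
    ∀ p : ℤ, (c : ℤ) ≤ p + S.card → (c : ℤ) - a ≤ p → CyclesBound k (sub Δ R (S ∪ V)) p

lemma simplexBoundary_single_apply_erase {N : Finset (Fin n)} {x : Fin n} (hx : x ∈ N) :
    simplexBoundary (Pi.single N (1 : k)) (N.erase x) = insertSign (N.erase x) x := by
  rw [simplexBoundary_apply, sum_eq_single x, insert_erase hx, Pi.single_eq_same, mul_one]
  · intro y hy hyx
    rw [Pi.single_apply, if_neg, mul_zero]
    intro hN
    exact mem_compl.mp hy (mem_erase.mpr ⟨hyx, hN ▸ mem_insert_self y _⟩)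
  · exact fun h => absurd (mem_compl.mpr (notMem_erase x N)) h

theorem not_cyclesBound_sub_compl_of_isLinkFrame (hΔ : IsComplex Δ) {V : Finset (Fin n)}
    {c : ℕ} (hframe : IsLinkFrame Δ V c)
    (hvan : ∀ R u, Disjoint R V → u ∉ R → u ∉ V →
      CyclesBound k (sub Δ R (insert u V)) ((c : ℤ) - 1)) :
    ¬ CyclesBound k (sub Δ Vᶜ V) ((c : ℤ) - 1) := by
  intro hbound
  obtain ⟨hface, N, hNV, hNcard, hN⟩ := hframe
  set z : Finset (Fin n) → k := simplexBoundary (Pi.single N 1)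
  have hz : IsChain (sub Δ N V) ((c : ℤ) - 1) z := by
    intro G hG
    obtain ⟨x, hx, hxG⟩ : ∃ x ∉ G, insert x G = N := by
      by_contra! h
      refine hG (sum_eq_zero fun x hx => ?_)
      rw [Pi.single_apply, if_neg (h x (mem_compl.mp hx)), mul_zero]
    have hGN : G ⊆ N := hxG ▸ subset_insert x G
    have hcard : G.card = c := by
      have := card_insert_of_notMem hx
      rw [hxG] at this
      omega
    exact ⟨⟨hGN, hface G (disjoint_of_subset_left hGN hNV) hcard.le⟩, by push_cast [hcard]; ring⟩
  obtain ⟨x₀, hx₀⟩ : N.Nonempty := card_pos.mp (by omega)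
  have hNVc : N ⊆ Vᶜ := fun x hx => mem_compl.mpr (disjoint_left.mp hNV hx)
  obtain ⟨w, hw, hwz⟩ := hbound z (hz.mono (sub_mono hNVc V))
    (simplexBoundary_simplexBoundary _)
  obtain ⟨w', hw', hw'z⟩ := exists_isChain_sub_of_union hΔ hvan hz (Vᶜ \ N) sdiff_disjoint
    (by rw [sdiff_union_of_subset hNVc]; exact disjoint_compl_left) w
    (by rwa [sdiff_union_of_subset hNVc]) hwz
  have hw'0 : w' = 0 := by
    funext F
    by_contra hF
    obtain ⟨⟨hFN, hFV⟩, hcard⟩ := hw' F hF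
    have hFN' : F = N := eq_of_subset_of_card_le hFN (by omega)
    exact hN (hFN' ▸ hFV)
  refine insertSign_ne_zero (k := k) (N.erase x₀) x₀ ?_
  rw [← simplexBoundary_single_apply_erase hx₀]
  change z _ = 0
  rw [← hw'z, hw'0, map_zero, Pi.zero_apply]

lemma IsLinkFrame.exists_insert (hΔ : IsComplex Δ) {V : Finset (Fin n)} {c : ℕ}
    (hframe : IsLinkFrame Δ V c) {v : Fin n} (hv : v ∉ V) (hvV : insert v V ∈ Δ) :
    ∃ c', IsLinkFrame Δ (insert v V) c' ∧ c ≤ c' + 1 := by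
  classical
  have hex : ∃ m, ∃ N, Disjoint N (insert v V) ∧ N.card = m ∧ N ∪ insert v V ∉ Δ := by
    obtain ⟨N, hNV, -, hN⟩ := hframe.2
    refine ⟨_, N.erase v, disjoint_insert_right.mpr ⟨notMem_erase v N,
      disjoint_of_subset_left (erase_subset v N) hNV⟩, rfl, fun h => hN (hΔ _ h _ ?_)⟩
    intro x hx
    by_cases hxv : x = v
    · exact mem_union_right _ (hxv ▸ mem_insert_self v V)
    · rcases mem_union.mp hx with hxN | hxV
      · exact mem_union_left _ (mem_erase.mpr ⟨hxv, hxN⟩)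
      · exact mem_union_right _ (mem_insert_of_mem hxV)
  have hpos : Nat.find hex ≠ 0 := by
    intro h0
    obtain ⟨N, -, hN0, hN⟩ := Nat.find_spec hex
    rw [h0, card_eq_zero] at hN0
    exact hN (by rwa [hN0, empty_union])
  refine ⟨Nat.find hex - 1, ⟨fun F hF hcard => ?_, ?_⟩, ?_⟩
  · by_contra hFV
    exact Nat.find_min hex (by omega : F.card < Nat.find hex) ⟨F, hF, rfl, hFV⟩
  · obtain ⟨N, hNV, hNcard, hN⟩ := Nat.find_spec hex
    exact ⟨N, hNV, by omega, hN⟩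
  · by_contra hlt
    obtain ⟨N, hNV, hNcard, hN⟩ := Nat.find_spec hex
    rw [disjoint_insert_right] at hNV
    refine hN ?_
    rw [union_insert, ← insert_union]
    exact hframe.1 _ (disjoint_insert_left.mpr ⟨hv, hNV.2⟩)
      (by rw [card_insert_of_notMem hNV.1]; omega)

lemma IsLinkCLeray.insert_of_le {V : Finset (Fin n)} {m c c' : ℕ}
    (h : IsLinkCLeray k Δ V (m + 1) c) (hc : c ≤ c' + 1) {v : Fin n} (hv : v ∉ V) :
    IsLinkCLeray k Δ (insert v V) m c' := by
  intro R S hRS hRV hSV p hp hpm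
  rw [disjoint_insert_right] at hRV hSV
  have := h R (insert v S) (disjoint_insert_right.mpr ⟨hRV.1, hRS⟩) hRV.2
    (disjoint_insert_left.mpr ⟨hv, hSV.2⟩) p
    (by rw [card_insert_of_notMem hSV.1]; push_cast; omega) (by push_cast; omega)
  rwa [insert_union, ← union_insert] at this

theorem not_cyclesBound_sub_compl (hΔ : IsComplex Δ) {a : ℕ} (ha : 1 ≤ a) :
    ∀ {V : Finset (Fin n)} {c : ℕ}, IsLinkFrame Δ V c → IsLinkCLeray k Δ V a c →
      ∀ S, Disjoint S V → S.card = a - 1 → S ∪ V ∈ Δ →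
        ¬ CyclesBound k (sub Δ (V ∪ S)ᶜ (S ∪ V)) ((c : ℤ) - a) := by
  induction a, ha using Nat.le_induction with
  | base =>
    intro V c hframe hleray S _ hS _
    rw [card_eq_zero.mp hS, union_empty, empty_union, Nat.cast_one]
    refine not_cyclesBound_sub_compl_of_isLinkFrame hΔ hframe fun R u hRV huR huV => ?_
    have := hleray R {u} (disjoint_singleton_right.mpr huR) hRV
      (disjoint_singleton_left.mpr huV) _ (by simp) le_rfl
    rwa [← insert_eq] at this
  | succ m hm ih =>
    intro V c hframe hleray S hSV hS hSface
    obtain ⟨v, hvS⟩ : S.Nonempty := card_pos.mp (by omega)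
    have hvV : v ∉ V := disjoint_left.mp hSV hvS
    have hVS : insert v V ∪ S.erase v = V ∪ S := by
      rw [insert_union, ← union_insert, insert_erase hvS]
    have hSVerase : S.erase v ∪ insert v V = S ∪ V := by
      rw [union_insert, ← insert_union, insert_erase hvS]
    obtain ⟨c', hframe', hcc'⟩ := hframe.exists_insert hΔ hvV
      (hΔ _ hSface _ (insert_subset (mem_union_left V hvS) subset_union_right))
    have hnv := ih hframe' (hleray.insert_of_le hcc' hvV) (S.erase v)
      (disjoint_insert_right.mpr ⟨notMem_erase v S,
        disjoint_of_subset_left (erase_subset v S) hSV⟩)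
      (by rw [card_erase_of_mem hvS, hS]; rfl) (by rwa [hSVerase])
    rw [hVS, hSVerase] at hnv
    have hc' : c' + 1 = c := by
      refine le_antisymm (not_lt.mp fun hlt => hnv ?_) hcc'
      exact hleray _ S (disjoint_compl_left.mono_right subset_union_right)
        (disjoint_compl_left.mono_right subset_union_left) hSV _
        (by rw [hS]; push_cast; omega) (by push_cast; omega)
    convert hnv using 2
    push_cast
    omega

end Nonvanishing

theorem stmt14_general (k : Type) [Field k] {n : ℕ} (Δ : Set (Finset (Fin n)))
    (hΔ : IsComplex Δ) (a c : ℕ) (hc : IsFrame Δ c) (ha : 1 ≤ a)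
    (hchar : ∀ R S T : Finset (Fin n), Disjoint R S → Disjoint R T → Disjoint S T →
      R ∪ S ∪ T = Finset.univ → ∀ p : ℤ, (c : ℤ) ≤ p + S.card → (c : ℤ) - a ≤ p →
      Subsingleton (ReducedHomology k (sub Δ R S) p)) :
    ∀ S ∈ Δ, S.card = a - 1 →
      ¬ Subsingleton (ReducedHomology k (link Δ S) ((c : ℤ) - a)) := by
  intro S hS hScard hlink
  have hframe : IsLinkFrame Δ ∅ c := by simpa [IsLinkFrame, IsFrame] using hc
  have hleray : IsLinkCLeray k Δ ∅ a c := fun R S' hRS _ _ p hp hpa => by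
    rw [union_empty]
    exact cyclesBound_of_subsingleton (isComplex_sub hΔ R S') (hchar R S' (R ∪ S')ᶜ hRS
      (disjoint_compl_right.mono_left subset_union_left)
      (disjoint_compl_right.mono_left subset_union_right) (union_compl _) p hp hpa)
  refine not_cyclesBound_sub_compl hΔ ha hframe hleray S (disjoint_empty_right S) hScard
    (by rwa [union_empty]) ?_
  rw [empty_union, union_empty]
  rw [link_eq_sub_compl] at hlink
  exact cyclesBound_of_subsingleton (isComplex_sub hΔ _ _) hlink

/-- if `Δ` is `(a+1)`-CLeray (characterized via vanishing of
`H̃_p(Δ_R^{S,T})` for `p + |S| ≥ c`, `p ≥ c - a`), then `H̃_{c-a}(lk_Δ S) ≠ 0`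
for every face `S` of cardinality `a - 1`. -/
theorem stmt14 (k : Type) [Field k] {n : ℕ} (Δ : Set (Finset (Fin n)))
    (hΔ : IsComplex Δ) (a c : ℕ) (hc : IsFrame Δ c) (ha : 1 ≤ a) (hac : a ≤ c)
    (hchar : ∀ R S T : Finset (Fin n), Disjoint R S → Disjoint R T → Disjoint S T →
      R ∪ S ∪ T = Finset.univ → ∀ p : ℤ, (c : ℤ) ≤ p + S.card → (c : ℤ) - a ≤ p →
      Subsingleton (ReducedHomology k (sub Δ R S) p)) :
    ∀ S ∈ Δ, S.card = a - 1 →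
      ¬ Subsingleton (ReducedHomology k (link Δ S) ((c : ℤ) - a)) :=
  stmt14_general k Δ hΔ a c hc ha hchar

end SCx
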